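/- As λ → ∞, the discounted value function converges pointwise to h: for a trajectory with h continuous at x₀ and bounded, lim_{λ→∞} V_λ(x₀) = h(x₀). -/

import Mathlib

/-! The weights `λ e^{-λs} ds` on `[0, t]` together with the atom `e^{-λt}` at `t` have total
mass one, so each payoff is an average of `f = h ∘ x` over `[0, t]`; stopping at once gives
`V_λ ≥ f 0`. Conversely, if `f ≤ M` on `[0, δ]` and `f ≤ C` on `[0, ∞)`, every payoff is at most
`M + (C - M) e^{-λδ}`, since only mass `e^{-λδ}` lies beyond `δ`; this tends to `M` as `λ → ∞`,
and `M > f 0` is arbitrary by continuity of `f` at `0`. -/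

open Real Set Filter Topology

theorem integral_mul_exp_neg_mul (lam a b : ℝ) :
    ∫ s in a..b, lam * exp (-lam * s) = exp (-lam * a) - exp (-lam * b) := by
  have hderiv (s : ℝ) : HasDerivAt (fun s => -exp (-lam * s)) (lam * exp (-lam * s)) s := by
    have h := ((hasDerivAt_id' s).const_mul (-lam)).exp.fun_neg
    rwa [show -(exp (-lam * s) * (-lam * 1)) = lam * exp (-lam * s) by ring] at h
  rw [intervalIntegral.integral_eq_sub_of_hasDerivAt (fun s _ => hderiv s)
    ((by fun_prop : Continuous fun s => lam * exp (-lam * s)).intervalIntegrable _ _)]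
  ring

section Discounted

variable {f : ℝ → ℝ} {lam M C δ t : ℝ}

theorem integral_mul_exp_neg_mul_le (hf : Continuous f) (hlam : 0 ≤ lam) {a b : ℝ} (hab : a ≤ b)
    (hfM : ∀ s ∈ Icc a b, f s ≤ M) :
    ∫ s in a..b, lam * exp (-lam * s) * f s ≤ M * (exp (-lam * a) - exp (-lam * b)) := by
  calc ∫ s in a..b, lam * exp (-lam * s) * f s
      ≤ ∫ s in a..b, M * (lam * exp (-lam * s)) := by
        refine intervalIntegral.integral_mono_on hab
          ((by fun_prop : Continuous _).intervalIntegrable _ _)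
          ((by fun_prop : Continuous _).intervalIntegrable _ _) fun s hs => ?_
        rw [mul_comm M]
        exact mul_le_mul_of_nonneg_left (hfM s hs) (by positivity)
    _ = M * (exp (-lam * a) - exp (-lam * b)) := by
        rw [intervalIntegral.integral_const_mul, integral_mul_exp_neg_mul]

noncomputable def discountedPayoff (lam : ℝ) (f : ℝ → ℝ) (t : ℝ) : ℝ :=
  (∫ s in (0 : ℝ)..t, lam * exp (-lam * s) * f s) + exp (-lam * t) * f t

noncomputable def discountedValue (lam : ℝ) (f : ℝ → ℝ) : ℝ :=
  ⨆ t : {t : ℝ // 0 ≤ t}, discountedPayoff lam f t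

@[simp]
theorem discountedPayoff_zero : discountedPayoff lam f 0 = f 0 := by
  simp [discountedPayoff]

theorem discountedPayoff_le (hf : Continuous f) (hlam : 0 ≤ lam) (ht : 0 ≤ t)
    (hfM : ∀ s ∈ Icc 0 t, f s ≤ M) : discountedPayoff lam f t ≤ M := by
  have hint := integral_mul_exp_neg_mul_le hf hlam ht hfM
  have hend : exp (-lam * t) * f t ≤ exp (-lam * t) * M :=
    mul_le_mul_of_nonneg_left (hfM t ⟨ht, le_rfl⟩) (exp_pos _).le
  simp only [discountedPayoff, mul_zero, exp_zero] at hint ⊢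
  linarith

theorem discountedPayoff_le_add_mul_exp (hf : Continuous f) (hlam : 0 ≤ lam) (hδ : 0 ≤ δ)
    (ht : 0 ≤ t) (hMC : M ≤ C) (hfM : ∀ s ∈ Icc 0 δ, f s ≤ M) (hfC : ∀ s ≥ 0, f s ≤ C) :
    discountedPayoff lam f t ≤ M + (C - M) * exp (-lam * δ) := by
  rcases le_total t δ with htδ | hδt
  · calc discountedPayoff lam f t ≤ M :=
          discountedPayoff_le hf hlam ht fun s hs => hfM s ⟨hs.1, hs.2.trans htδ⟩
      _ ≤ M + (C - M) * exp (-lam * δ) :=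
          le_add_of_nonneg_right (mul_nonneg (sub_nonneg.2 hMC) (exp_pos _).le)
  · have hsplit := intervalIntegral.integral_add_adjacent_intervals (μ := MeasureTheory.volume)
      ((by fun_prop : Continuous fun s => lam * exp (-lam * s) * f s).intervalIntegrable 0 δ)
      ((by fun_prop : Continuous fun s => lam * exp (-lam * s) * f s).intervalIntegrable δ t)
    have hnear := integral_mul_exp_neg_mul_le hf hlam hδ hfM
    have hfar := integral_mul_exp_neg_mul_le hf hlam hδt fun s hs => hfC s (hδ.trans hs.1)
    have hend : exp (-lam * t) * f t ≤ exp (-lam * t) * C :=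
      mul_le_mul_of_nonneg_left (hfC t ht) (exp_pos _).le
    simp only [discountedPayoff, ← hsplit, mul_zero, exp_zero] at hnear ⊢
    linarith

theorem apply_zero_le_discountedValue (hf : Continuous f) (hfC : ∀ s ≥ 0, f s ≤ C)
    (hlam : 0 ≤ lam) : f 0 ≤ discountedValue lam f := by
  have hbdd : BddAbove (range fun t : {t : ℝ // 0 ≤ t} => discountedPayoff lam f t) :=
    ⟨C, forall_mem_range.2 fun t => discountedPayoff_le hf hlam t.2 fun s hs => hfC s hs.1⟩
  simpa [discountedValue] using le_ciSup hbdd ⟨0, le_rfl⟩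

theorem tendsto_discountedValue_atTop (hf : Continuous f) (hfC : ∀ s ≥ 0, f s ≤ C) :
    Tendsto (discountedValue · f) atTop (𝓝 (f 0)) := by
  refine tendsto_order.2 ⟨fun a ha => ?_, fun b hb => ?_⟩
  · filter_upwards [eventually_ge_atTop 0] with lam hlam
    exact ha.trans_le (apply_zero_le_discountedValue hf hfC hlam)
  · obtain ⟨M, hM, hMb⟩ := exists_between hb
    obtain ⟨δ, hδ, hfM⟩ := Metric.nhds_basis_closedBall.eventually_iff.1
      ((hf.tendsto 0).eventually (eventually_le_nhds hM))
    rw [Real.closedBall_eq_Icc, zero_sub, zero_add] at hfM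
    have hdecay : Tendsto (fun lam => M + (max C M - M) * exp (-lam * δ)) atTop (𝓝 M) := by
      have := (tendsto_exp_neg_atTop_nhds_zero.comp (tendsto_id.atTop_mul_const hδ))
      simpa using this.const_mul (max C M - M) |>.const_add M
    filter_upwards [hdecay.eventually (eventually_lt_nhds hMb), eventually_ge_atTop 0]
      with lam hlamb hlam
    refine lt_of_le_of_lt (ciSup_le fun t => ?_) hlamb
    exact discountedPayoff_le_add_mul_exp hf hlam hδ.le t.2 (le_max_right _ _)
      (fun s hs => hfM ⟨by linarith [hs.1], hs.2⟩) fun s hs => (hfC s hs).trans (le_max_left _ _)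

end Discounted

/-- As `λ → ∞`, the discounted value function converges pointwise to `h`:
for a continuous trajectory `x` in `ℝⁿ` and continuous bounded `h`,
`lim_{λ→∞} V_λ(x₀) = h(x₀)` where `x₀ = x 0`. -/
theorem discounted_value_tendsto_h
    {n : ℕ}
    (x : ℝ → EuclideanSpace ℝ (Fin n)) (hx : Continuous x)
    (h : EuclideanSpace ℝ (Fin n) → ℝ) (hh : Continuous h)
    (hb : ∃ C, ∀ y, |h y| ≤ C)
    (V : ℝ → ℝ)
    (hV : ∀ lam : ℝ, 0 < lam → V lam =
      ⨆ t : {t : ℝ // 0 ≤ t},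
        ((∫ s in (0:ℝ)..(t : ℝ), lam * Real.exp (-lam * s) * h (x s)) +
          Real.exp (-lam * (t : ℝ)) * h (x (t : ℝ)))) :
    Filter.Tendsto V Filter.atTop (nhds (h (x 0))) := by
  obtain ⟨C, hC⟩ := hb
  have hbound : ∀ s ≥ 0, h (x s) ≤ C := fun s _ => (le_abs_self _).trans (hC (x s))
  refine (tendsto_discountedValue_atTop (hh.comp hx) hbound).congr' ?_
  filter_upwards [eventually_gt_atTop 0] with lam hlam
  exact (hV lam hlam).symm
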